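/- Let H be a finite-dimensional complex inner product space and let R : ℂ^j → H, S : ℂ^k → H, T : ℂ^ℓ → H be linear maps. Writing G(A) := det(A* A) for the Gram determinant of a linear map A into H, one has G([R,S,T]) · G(R) ≤ G([R,S]) · G([R,T]), where [·,·] denotes the combined map on the direct sum of the domains. -/

import Mathlib

open scoped ComplexOrder

/-- The combined map on the direct sum of the domains. -/
noncomputable def combinedMap {ι κ H : Type*}
    [NormedAddCommGroup H] [InnerProductSpace ℂ H]
    (S : EuclideanSpace ℂ ι →ₗ[ℂ] H) (T : EuclideanSpace ℂ κ →ₗ[ℂ] H) :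
    EuclideanSpace ℂ (ι ⊕ κ) →ₗ[ℂ] H :=
  S ∘ₗ (WithLp.linearEquiv 2 ℂ (ι → ℂ)).symm.toLinearMap ∘ₗ LinearMap.funLeft ℂ ℂ Sum.inl ∘ₗ
      (WithLp.linearEquiv 2 ℂ (ι ⊕ κ → ℂ)).toLinearMap +
    T ∘ₗ (WithLp.linearEquiv 2 ℂ (κ → ℂ)).symm.toLinearMap ∘ₗ LinearMap.funLeft ℂ ℂ Sum.inr ∘ₗ
      (WithLp.linearEquiv 2 ℂ (ι ⊕ κ → ℂ)).toLinearMap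

/-- The Gram determinant `G(A) = det (A* A)` of a linear map into `H`. -/
noncomputable def gramDet {ι H : Type*} [Fintype ι]
    [NormedAddCommGroup H] [InnerProductSpace ℂ H] [FiniteDimensional ℂ H]
    (A : EuclideanSpace ℂ ι →ₗ[ℂ] H) : ℂ :=
  LinearMap.det (LinearMap.adjoint A ∘ₗ A)

/-!
Let `P` be the orthogonal projection onto `(range R)ᗮ`. When `G(R) ≠ 0`, the Schur complement
formula for the block Gram matrix gives `G([R, W]) = G(R) · G(P W)` for every `W`. Applied to
`W = [S, T]`, `S` and `T`, the inequality becomes Fischer's inequality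
`G([P S, P T]) ≤ G(P S) · G(P T)`, which follows from the same factorisation and the monotonicity
of the determinant on positive semidefinite matrices. When `G(R) = 0` the left side vanishes.
-/

open Matrix

namespace Matrix

variable {𝕜 : Type*} [RCLike 𝕜] {n a b c : Type*} [Fintype n]

lemma PosSemidef.det_le_one [Fintype a] [DecidableEq a] {S : Matrix a a 𝕜} (hS : S.PosSemidef)
    (h1S : (1 - S).PosSemidef) : S.det ≤ 1 := by
  have hH := hS.isHermitian
  have heig : ∀ i, hH.eigenvalues i ≤ 1 := fun i => by
    have hv : star ⇑(hH.eigenvectorBasis i) ⬝ᵥ ⇑(hH.eigenvectorBasis i) = 1 := by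
      rw [dotProduct_comm, ← EuclideanSpace.inner_eq_star_dotProduct, inner_self_eq_norm_sq_to_K,
        hH.eigenvectorBasis.orthonormal.1 i]
      simp
    have h := h1S.re_dotProduct_nonneg (hH.eigenvectorBasis i)
    rwa [sub_mulVec, one_mulVec, dotProduct_sub, map_sub, hv, ← hH.eigenvalues_eq, RCLike.one_re,
      sub_nonneg] at h
  rw [hH.det_eq_prod_eigenvalues]
  exact Finset.prod_le_one (fun i _ => by simpa using hS.eigenvalues_nonneg i)
    fun i _ => by exact_mod_cast heig i

open scoped MatrixOrder in
lemma PosSemidef.det_le_det [Fintype a] [DecidableEq a] {S D : Matrix a a 𝕜} (hS : S.PosSemidef)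
    (hSD : (D - S).PosSemidef) : S.det ≤ D.det := by
  have hD : D.PosSemidef := by simpa using hSD.add hS
  by_cases hdet : D.det = 0
  · obtain ⟨x, hx, hDx⟩ := exists_mulVec_eq_zero_iff.mpr hdet
    have hSx : star x ⬝ᵥ S *ᵥ x = 0 := by
      have h := hSD.dotProduct_mulVec_nonneg x
      rw [sub_mulVec, dotProduct_sub, hDx, dotProduct_zero, zero_sub, neg_nonneg] at h
      exact le_antisymm h (hS.dotProduct_mulVec_nonneg x)
    rw [hdet, exists_mulVec_eq_zero_iff.mp ⟨x, hx, (hS.dotProduct_mulVec_zero_iff x).mp hSx⟩]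
  -- Congruence by `D ^ (-1/2)` reduces to the case `D = 1`.
  set C := CFC.sqrt D
  have hCC : C * C = D := CFC.sqrt_mul_sqrt_self D hD.nonneg
  have hC : C.IsHermitian := (CFC.sqrt_nonneg D).posSemidef.isHermitian
  have hCdet : IsUnit C.det := by
    refine isUnit_iff_ne_zero.mpr fun h => hdet ?_
    rw [← hCC, det_mul, h, mul_zero]
  have hCinv : C⁻¹ᴴ = C⁻¹ := by rw [conjTranspose_nonsing_inv, hC.eq]
  set S' := C⁻¹ * S * C⁻¹
  have hS' : S = C * S' * C := by
    simp only [S', ← Matrix.mul_assoc, mul_nonsing_inv _ hCdet, Matrix.one_mul]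
    rw [Matrix.mul_assoc, nonsing_inv_mul _ hCdet, Matrix.mul_one]
  have h1S' : (1 - S').PosSemidef := by
    have hDC : C⁻¹ * D * C⁻¹ = 1 := by
      rw [← hCC, ← Matrix.mul_assoc, nonsing_inv_mul _ hCdet, Matrix.one_mul,
        mul_nonsing_inv _ hCdet]
    have h := hSD.conjTranspose_mul_mul_same C⁻¹
    rwa [Matrix.mul_sub, Matrix.sub_mul, hCinv, hDC] at h
  have hS'psd : S'.PosSemidef := by
    simpa only [hCinv] using hS.conjTranspose_mul_mul_same C⁻¹
  have hdetS' : S'.det ≤ 1 := hS'psd.det_le_one h1S'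
  clear_value S'
  rw [hS', ← hCC, det_mul, det_mul, det_mul]
  calc C.det * S'.det * C.det = S'.det * (C.det * C.det) := by ring
    _ ≤ 1 * (C.det * C.det) := by
      gcongr
      rw [← det_mul, hCC]
      exact hD.det_nonneg
    _ = C.det * C.det := one_mul _

lemma conjTranspose_fromCols_mul_fromCols (U : Matrix n a 𝕜) (V : Matrix n b 𝕜) :
    (fromCols U V)ᴴ * fromCols U V = fromBlocks (Uᴴ * U) (Uᴴ * V) (Vᴴ * U) (Vᴴ * V) := by
  rw [conjTranspose_fromCols_eq_fromRows_conjTranspose, fromRows_mul_fromCols]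

lemma det_conjTranspose_fromCols_mul_fromCols_eq_zero [Fintype a] [Fintype b]
    [DecidableEq a] [DecidableEq b] {U : Matrix n a 𝕜} (V : Matrix n b 𝕜)
    (hU : (Uᴴ * U).det = 0) : ((fromCols U V)ᴴ * fromCols U V).det = 0 := by
  obtain ⟨x, hx, hUx⟩ := exists_mulVec_eq_zero_iff.mpr hU
  refine exists_mulVec_eq_zero_iff.mp ⟨Sum.elim x 0, fun h => hx ?_, ?_⟩
  · simpa using congrArg (· ∘ Sum.inl) h
  · simp [← mulVec_mulVec, (conjTranspose_mul_self_mulVec_eq_zero U x).mp hUx]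

/-- The orthogonal projection onto the orthogonal complement of the column space of `U`
(meaningful only when `Uᴴ * U` is invertible). -/
noncomputable def orthProjCompl [DecidableEq n] [Fintype a] [DecidableEq a] (U : Matrix n a 𝕜) :
    Matrix n n 𝕜 :=
  1 - U * (Uᴴ * U)⁻¹ * Uᴴ

lemma schurComplement_gram_eq [DecidableEq n] [Fintype a] [DecidableEq a] {U : Matrix n a 𝕜}
    (V : Matrix n b 𝕜) (hU : IsUnit (Uᴴ * U).det) :
    Vᴴ * V - Vᴴ * U * (Uᴴ * U)⁻¹ * (Uᴴ * V) =
      (orthProjCompl U * V)ᴴ * (orthProjCompl U * V) := by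
  have hinv : ((Uᴴ * U)⁻¹)ᴴ = (Uᴴ * U)⁻¹ := by
    rw [conjTranspose_nonsing_inv, conjTranspose_mul, conjTranspose_conjTranspose]
  have hcancel : ∀ M : Matrix a b 𝕜, Uᴴ * (U * ((Uᴴ * U)⁻¹ * M)) = M := fun M => by
    rw [← Matrix.mul_assoc, ← Matrix.mul_assoc, mul_nonsing_inv _ hU, Matrix.one_mul]
  simp only [orthProjCompl, Matrix.sub_mul, Matrix.mul_sub, conjTranspose_sub, conjTranspose_mul,
    hinv, conjTranspose_conjTranspose, Matrix.one_mul, Matrix.mul_assoc, hcancel]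
  abel

lemma det_conjTranspose_fromCols_mul_fromCols [DecidableEq n] [Fintype a] [Fintype b]
    [DecidableEq a] [DecidableEq b] {U : Matrix n a 𝕜} (V : Matrix n b 𝕜)
    (hU : IsUnit (Uᴴ * U).det) :
    ((fromCols U V)ᴴ * fromCols U V).det =
      (Uᴴ * U).det * ((orthProjCompl U * V)ᴴ * (orthProjCompl U * V)).det := by
  let := invertibleOfIsUnitDet _ hU
  rw [conjTranspose_fromCols_mul_fromCols, det_fromBlocks₁₁, invOf_eq_nonsing_inv,
    schurComplement_gram_eq V hU]

theorem det_conjTranspose_fromCols_mul_fromCols_le [DecidableEq n] [Fintype a] [Fintype b]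
    [DecidableEq a] [DecidableEq b] (U : Matrix n a 𝕜) (V : Matrix n b 𝕜) :
    ((fromCols U V)ᴴ * fromCols U V).det ≤ (Uᴴ * U).det * (Vᴴ * V).det := by
  by_cases hU : (Uᴴ * U).det = 0
  · rw [det_conjTranspose_fromCols_mul_fromCols_eq_zero V hU, hU, zero_mul]
  have hU' := isUnit_iff_ne_zero.mpr hU
  rw [det_conjTranspose_fromCols_mul_fromCols V hU']
  refine mul_le_mul_of_nonneg_left ((posSemidef_conjTranspose_mul_self _).det_le_det ?_)
    (posSemidef_conjTranspose_mul_self U).det_nonneg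
  rw [← schurComplement_gram_eq V hU', sub_sub_cancel]
  simpa [conjTranspose_mul, Matrix.mul_assoc] using
    (posSemidef_conjTranspose_mul_self U).inv.conjTranspose_mul_mul_same (Uᴴ * V)

theorem det_conjTranspose_fromCols_fromCols_mul_le [DecidableEq n] [Fintype a] [Fintype b]
    [Fintype c] [DecidableEq a] [DecidableEq b] [DecidableEq c]
    (X : Matrix n a 𝕜) (Y : Matrix n b 𝕜) (Z : Matrix n c 𝕜) :
    ((fromCols X (fromCols Y Z))ᴴ * fromCols X (fromCols Y Z)).det * (Xᴴ * X).det ≤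
      ((fromCols X Y)ᴴ * fromCols X Y).det * ((fromCols X Z)ᴴ * fromCols X Z).det := by
  have hX := (posSemidef_conjTranspose_mul_self X).det_nonneg
  by_cases h : (Xᴴ * X).det = 0
  · rw [h, mul_zero]
    exact mul_nonneg (posSemidef_conjTranspose_mul_self _).det_nonneg
      (posSemidef_conjTranspose_mul_self _).det_nonneg
  have h' := isUnit_iff_ne_zero.mpr h
  rw [det_conjTranspose_fromCols_mul_fromCols _ h', det_conjTranspose_fromCols_mul_fromCols _ h',
    det_conjTranspose_fromCols_mul_fromCols _ h', mul_fromCols]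
  calc _ = (Xᴴ * X).det * (Xᴴ * X).det * _ := by ring
    _ ≤ (Xᴴ * X).det * (Xᴴ * X).det * (_ * _) :=
      mul_le_mul_of_nonneg_left (det_conjTranspose_fromCols_mul_fromCols_le _ _) (mul_nonneg hX hX)
    _ = _ := by ring

end Matrix

section GramDet

variable {H : Type*} [NormedAddCommGroup H] [InnerProductSpace ℂ H]

lemma combinedMap_apply {ι κ : Type*}
    (A : EuclideanSpace ℂ ι →ₗ[ℂ] H) (B : EuclideanSpace ℂ κ →ₗ[ℂ] H)
    (v : EuclideanSpace ℂ (ι ⊕ κ)) :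
    combinedMap A B v = A (WithLp.toLp 2 (v ∘ Sum.inl)) + B (WithLp.toLp 2 (v ∘ Sum.inr)) := rfl

lemma combinedMap_single_inl {ι κ : Type*} [DecidableEq ι] [DecidableEq κ]
    (A : EuclideanSpace ℂ ι →ₗ[ℂ] H) (B : EuclideanSpace ℂ κ →ₗ[ℂ] H) (i : ι) (c : ℂ) :
    combinedMap A B (EuclideanSpace.single (Sum.inl i) c) = A (EuclideanSpace.single i c) := by
  have hl : (Pi.single (Sum.inl i) c : ι ⊕ κ → ℂ) ∘ Sum.inl = Pi.single i c := by
    ext; simp [Pi.single_apply]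
  have hr : (Pi.single (Sum.inl i) c : ι ⊕ κ → ℂ) ∘ Sum.inr = 0 := by
    ext; simp
  rw [combinedMap_apply]
  simp [hl, hr]

lemma combinedMap_single_inr {ι κ : Type*} [DecidableEq ι] [DecidableEq κ]
    (A : EuclideanSpace ℂ ι →ₗ[ℂ] H) (B : EuclideanSpace ℂ κ →ₗ[ℂ] H) (i : κ) (c : ℂ) :
    combinedMap A B (EuclideanSpace.single (Sum.inr i) c) = B (EuclideanSpace.single i c) := by
  have hl : (Pi.single (Sum.inr i) c : ι ⊕ κ → ℂ) ∘ Sum.inl = 0 := by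
    ext; simp
  have hr : (Pi.single (Sum.inr i) c : ι ⊕ κ → ℂ) ∘ Sum.inr = Pi.single i c := by
    ext; simp [Pi.single_apply]
  rw [combinedMap_apply]
  simp [hl, hr]

variable [FiniteDimensional ℂ H]

noncomputable def toStdMatrix {ι : Type*} [Fintype ι] [DecidableEq ι]
    (A : EuclideanSpace ℂ ι →ₗ[ℂ] H) : Matrix (Fin (Module.finrank ℂ H)) ι ℂ :=
  LinearMap.toMatrix (EuclideanSpace.basisFun ι ℂ).toBasis (stdOrthonormalBasis ℂ H).toBasis A

lemma gramDet_eq_det_toStdMatrix {ι : Type*} [Fintype ι] [DecidableEq ι]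
    (A : EuclideanSpace ℂ ι →ₗ[ℂ] H) :
    gramDet A = ((toStdMatrix A)ᴴ * toStdMatrix A).det := by
  rw [gramDet, ← LinearMap.det_toMatrix (EuclideanSpace.basisFun ι ℂ).toBasis,
    LinearMap.toMatrix_comp _ (stdOrthonormalBasis ℂ H).toBasis, LinearMap.toMatrix_adjoint]
  rfl

lemma toStdMatrix_combinedMap {ι κ : Type*} [Fintype ι] [Fintype κ] [DecidableEq ι]
    [DecidableEq κ]
    (A : EuclideanSpace ℂ ι →ₗ[ℂ] H) (B : EuclideanSpace ℂ κ →ₗ[ℂ] H) :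
    toStdMatrix (combinedMap A B) = fromCols (toStdMatrix A) (toStdMatrix B) := by
  ext r (i | i) <;>
  simp [toStdMatrix, LinearMap.toMatrix_apply, combinedMap_single_inl, combinedMap_single_inr]

end GramDet

/-- Strong subadditivity (Koteljanskiĭ / Hadamard–Fischer) for Gram determinants:
`G([R,S,T]) · G(R) ≤ G([R,S]) · G([R,T])`. -/
theorem stmt_3 {j k ℓ : ℕ} {H : Type*}
    [NormedAddCommGroup H] [InnerProductSpace ℂ H] [FiniteDimensional ℂ H]
    (R : EuclideanSpace ℂ (Fin j) →ₗ[ℂ] H) (S : EuclideanSpace ℂ (Fin k) →ₗ[ℂ] H)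
    (T : EuclideanSpace ℂ (Fin ℓ) →ₗ[ℂ] H) :
    gramDet (combinedMap R (combinedMap S T)) * gramDet R ≤
      gramDet (combinedMap R S) * gramDet (combinedMap R T) := by
  simp only [gramDet_eq_det_toStdMatrix, toStdMatrix_combinedMap]
  exact det_conjTranspose_fromCols_fromCols_mul_le _ _ _
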